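/- arXiv:2311.14168 — 2 statements merged into one kernel-verified Lean document; each statement's English description precedes it below -/
import Mathlib

section
/- (Perturbation of iterated conjugation maps and their discounted sums.) Let γ ∈ (0,1), ρ > 0 with γρ² < 1, and let L, L' ∈ ℝ^{n×n} satisfy ‖L‖ ≤ ρ and ‖L'‖ ≤ ρ. Let ε ≥ 0 be such that ‖L'YL'ᵀ − LYLᵀ‖ ≤ ε‖Y‖ for every symmetric Y ∈ ℝ^{n×n}. Then for every symmetric X ∈ ℝ^{n×n}: (i) ‖ Σ_{t=0}^∞ γ^t ( L'^t X (L'ᵀ)^t − L^t X (Lᵀ)^t ) ‖ ≤ Σ_{t=0}^∞ γ^t ‖ L'^t X (L'ᵀ)^t − L^t X (Lᵀ)^t ‖ ≤ ξ_{γ,ρ}·ε·‖X‖, where ξ_{γ,ρ} := (1−γρ²+γ)/(1−γρ²)²; and (ii) if moreover ρ < 1, then for every integer T ≥ 1, Σ_{t=0}^{T−1} ‖ L'^t X (L'ᵀ)^t − L^t X (Lᵀ)^t ‖ ≤ ( (2 − ρ² − ρ^{2T})/(1−ρ²)² )·ε·‖X‖. -/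
open Matrix


noncomputable def spec {m l : ℕ} (M : Matrix (Fin m) (Fin l) ℝ) : ℝ :=
  ‖LinearMap.toContinuousLinearMap (Matrix.toEuclideanLin M)‖

noncomputable def sigMin {m l : ℕ} (M : Matrix (Fin m) (Fin l) ℝ) : ℝ :=
  sInf {r : ℝ | ∃ x : EuclideanSpace ℝ (Fin l), ‖x‖ = 1 ∧
    r = ‖LinearMap.toContinuousLinearMap (Matrix.toEuclideanLin M) x‖}

noncomputable def frob {m l : ℕ} (M : Matrix (Fin m) (Fin l) ℝ) : ℝ :=
  Real.sqrt (Matrix.trace (Mᵀ * M))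

def loewner {m : ℕ} (X Y : Matrix (Fin m) (Fin m) ℝ) : Prop :=
  (Y - X).PosSemidef

noncomputable def Pmat {n k : ℕ} (γ : ℝ) (A : Matrix (Fin n) (Fin n) ℝ)
    (B : Matrix (Fin n) (Fin k) ℝ) (Q : Matrix (Fin n) (Fin n) ℝ)
    (R : Matrix (Fin k) (Fin k) ℝ) (K : Matrix (Fin k) (Fin n) ℝ) :
    Matrix (Fin n) (Fin n) ℝ :=
  ∑' t : ℕ, γ ^ t • (((A - B * K)ᵀ) ^ t * (Q + Kᵀ * R * K) * (A - B * K) ^ t)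

noncomputable def Emat {n k : ℕ} (γ : ℝ) (A : Matrix (Fin n) (Fin n) ℝ)
    (B : Matrix (Fin n) (Fin k) ℝ) (Q : Matrix (Fin n) (Fin n) ℝ)
    (R : Matrix (Fin k) (Fin k) ℝ) (K : Matrix (Fin k) (Fin n) ℝ) :
    Matrix (Fin k) (Fin n) ℝ :=
  -(γ • (Bᵀ * Pmat γ A B Q R K * (A - B * K))) + R * K

noncomputable def Smat {n k : ℕ} (γ : ℝ) (A : Matrix (Fin n) (Fin n) ℝ)
    (B : Matrix (Fin n) (Fin k) ℝ) (W : Matrix (Fin n) (Fin n) ℝ)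
    (D₀ : Matrix (Fin n) (Fin n) ℝ) (K : Matrix (Fin k) (Fin n) ℝ)
    (Sg : Matrix (Fin k) (Fin k) ℝ) : Matrix (Fin n) (Fin n) ℝ :=
  ∑' t : ℕ, γ ^ t •
    ((A - B * K) ^ t * D₀ * ((A - B * K)ᵀ) ^ t +
      ∑ s ∈ Finset.Icc 1 t,
        (A - B * K) ^ (t - s) * (B * Sg * Bᵀ + W) * ((A - B * K)ᵀ) ^ (t - s))

noncomputable def Cost {n k : ℕ} (γ τ : ℝ) (A : Matrix (Fin n) (Fin n) ℝ)
    (B : Matrix (Fin n) (Fin k) ℝ) (Q : Matrix (Fin n) (Fin n) ℝ)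
    (R : Matrix (Fin k) (Fin k) ℝ) (W : Matrix (Fin n) (Fin n) ℝ)
    (D₀ : Matrix (Fin n) (Fin n) ℝ) (K : Matrix (Fin k) (Fin n) ℝ)
    (Sg : Matrix (Fin k) (Fin k) ℝ) : ℝ :=
  Matrix.trace (D₀ * Pmat γ A B Q R K) +
    (1 / (1 - γ)) *
      (Matrix.trace (Sg * (R + γ • (Bᵀ * Pmat γ A B Q R K * B))) -
        (τ / 2) * ((k : ℝ) + Real.log ((2 * Real.pi) ^ k * Sg.det)) +
        γ * Matrix.trace (W * Pmat γ A B Q R K))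

noncomputable def fent {n k : ℕ} (γ τ : ℝ) (A : Matrix (Fin n) (Fin n) ℝ)
    (B : Matrix (Fin n) (Fin k) ℝ) (Q : Matrix (Fin n) (Fin n) ℝ)
    (R : Matrix (Fin k) (Fin k) ℝ) (K : Matrix (Fin k) (Fin n) ℝ)
    (Sg : Matrix (Fin k) (Fin k) ℝ) : ℝ :=
  (τ / (2 * (1 - γ))) * Real.log Sg.det -
    (1 / (1 - γ)) * Matrix.trace (Sg * (R + γ • (Bᵀ * Pmat γ A B Q R K * B)))

section SpecAux
open scoped Matrix.Norms.L2Operator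
variable {n : ℕ}

lemma spec_eq_norm' (M : Matrix (Fin n) (Fin n) ℝ) : spec M = ‖M‖ := rfl

lemma spec_nonneg' (M : Matrix (Fin n) (Fin n) ℝ) : 0 ≤ spec M :=
  norm_nonneg (E := Matrix (Fin n) (Fin n) ℝ) M

lemma spec_mul_le' (A B : Matrix (Fin n) (Fin n) ℝ) : spec (A * B) ≤ spec A * spec B :=
  Matrix.l2_opNorm_mul A B

lemma spec_transpose' (M : Matrix (Fin n) (Fin n) ℝ) : spec Mᵀ = spec M := by
  have h : Mᴴ = Mᵀ := by ext i j; simp [Matrix.conjTranspose_apply]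
  rw [← h]; exact Matrix.l2_opNorm_conjTranspose M

lemma spec_add_le' (A B : Matrix (Fin n) (Fin n) ℝ) : spec (A + B) ≤ spec A + spec B :=
  norm_add_le (E := Matrix (Fin n) (Fin n) ℝ) A B

lemma spec_smul' (c : ℝ) (M : Matrix (Fin n) (Fin n) ℝ) : spec (c • M) = |c| * spec M := by
  rw [spec_eq_norm', spec_eq_norm', norm_smul]; simp [Real.norm_eq_abs]

lemma spec_zero' : spec (0 : Matrix (Fin n) (Fin n) ℝ) = 0 :=
  norm_zero (E := Matrix (Fin n) (Fin n) ℝ)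

lemma conj_spec_le' {M : Matrix (Fin n) (Fin n) ℝ} {ρ : ℝ} (hρ : 0 ≤ ρ)
    (hM : spec M ≤ ρ) (Z : Matrix (Fin n) (Fin n) ℝ) :
    spec (M * Z * Mᵀ) ≤ ρ ^ 2 * spec Z := by
  calc spec (M * Z * Mᵀ) ≤ spec (M * Z) * spec Mᵀ := spec_mul_le' _ _
    _ ≤ (spec M * spec Z) * spec Mᵀ :=
        mul_le_mul_of_nonneg_right (spec_mul_le' _ _) (spec_nonneg' _)
    _ ≤ ρ ^ 2 * spec Z := by
        rw [spec_transpose']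
        have key : spec M * spec M ≤ ρ * ρ := mul_le_mul hM hM (spec_nonneg' M) hρ
        nlinarith [key, spec_nonneg' Z, spec_nonneg' M]

end SpecAux

section TsumBound
attribute [local instance] Matrix.normedAddCommGroup Matrix.normedSpace

lemma tsum_spec_bound' {n : ℕ} (F : ℕ → Matrix (Fin n) (Fin n) ℝ) (g : ℕ → ℝ)
    (hb : ∀ t, spec (F t) ≤ g t) (hg : Summable g) :
    spec (∑' t, F t) ≤ ∑' t, spec (F t) := by
  let e : Matrix (Fin n) (Fin n) ℝ ≃L[ℝ]
      (EuclideanSpace ℝ (Fin n) →L[ℝ] EuclideanSpace ℝ (Fin n)) :=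
    (Matrix.toEuclideanLin.trans LinearMap.toContinuousLinearMap).toContinuousLinearEquiv
  have hspec : ∀ M : Matrix (Fin n) (Fin n) ℝ, spec M = ‖e M‖ := fun _ => rfl
  have hnorm : Summable (fun t => ‖e (F t)‖) :=
    Summable.of_nonneg_of_le (fun t => norm_nonneg _)
      (fun t => by rw [← hspec]; exact hb t) hg
  rw [hspec, e.map_tsum]
  refine (norm_tsum_le_tsum_norm hnorm).trans_eq ?_
  exact tsum_congr fun t => (hspec _).symm

end TsumBound

lemma partial_geom_aux' (x : ℝ) (hx0 : 0 ≤ x) (hx1 : x < 1) : ∀ m : ℕ,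
    (∑ s ∈ Finset.range m, ((s : ℝ) + 1) * x ^ s) * (1 - x) ^ 2 +
      ((m : ℝ) + 1) * x ^ m * (1 - x) ≤ 2 - x - x ^ (m + 1) := by
  intro m
  induction m with
  | zero => simp; nlinarith
  | succ m ih =>
    rw [Finset.sum_range_succ]
    have hp2 : x ^ (m + 1 + 1) = x ^ m * x * x := by rw [pow_succ, pow_succ]
    have hp1 : x ^ (m + 1) = x ^ m * x := pow_succ x m
    push_cast
    rw [hp2, hp1]
    rw [hp1] at ih
    nlinarith [ih, pow_nonneg hx0 m]

/-- Perturbation of iterated conjugation maps and their discounted sums. -/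
theorem stmt18 (n : ℕ) (hn : 0 < n)
    (γ ρ : ℝ) (hγ0 : 0 < γ) (hγ1 : γ < 1) (hρ0 : 0 < ρ) (hγρ : γ * ρ ^ 2 < 1)
    (L L' : Matrix (Fin n) (Fin n) ℝ) (hL : spec L ≤ ρ) (hL' : spec L' ≤ ρ)
    (ε : ℝ) (hε : 0 ≤ ε)
    (hpert : ∀ Y : Matrix (Fin n) (Fin n) ℝ, Y.IsHermitian →
      spec (L' * Y * L'ᵀ - L * Y * Lᵀ) ≤ ε * spec Y)
    (X : Matrix (Fin n) (Fin n) ℝ) (hX : X.IsHermitian) :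
    (spec (∑' t : ℕ, γ ^ t • (L' ^ t * X * (L'ᵀ) ^ t - L ^ t * X * (Lᵀ) ^ t)) ≤
        ∑' t : ℕ, γ ^ t * spec (L' ^ t * X * (L'ᵀ) ^ t - L ^ t * X * (Lᵀ) ^ t) ∧
      (∑' t : ℕ, γ ^ t * spec (L' ^ t * X * (L'ᵀ) ^ t - L ^ t * X * (Lᵀ) ^ t)) ≤
        (1 - γ * ρ ^ 2 + γ) / (1 - γ * ρ ^ 2) ^ 2 * ε * spec X) ∧
    (ρ < 1 → ∀ T : ℕ, 1 ≤ T →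
      (∑ t ∈ Finset.range T, spec (L' ^ t * X * (L'ᵀ) ^ t - L ^ t * X * (Lᵀ) ^ t)) ≤
        (2 - ρ ^ 2 - ρ ^ (2 * T)) / (1 - ρ ^ 2) ^ 2 * ε * spec X) := by
    classical
  have hρne : ρ ≠ 0 := ne_of_gt hρ0
  set r : ℝ := γ * ρ ^ 2 with hrdef
  have hr0 : 0 < r := by positivity
  have hr1 : r < 1 := hγρ
  have h1r : 0 < 1 - r := by linarith
  have hcnn : 0 ≤ ε * spec X := mul_nonneg hε (spec_nonneg' X)
  -- Hermitian property of the iterates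
  have hCherm : ∀ t : ℕ, (L ^ t * X * (Lᵀ) ^ t).IsHermitian := by
    intro t
    have h : (Lᵀ) ^ t = (L ^ t)ᴴ := by
      rw [← Matrix.transpose_pow]
      ext i j; simp [Matrix.conjTranspose_apply]
    rw [h]
    exact Matrix.isHermitian_mul_mul_conjTranspose _ hX
  -- norm bound on the unperturbed iterates
  have hC : ∀ t : ℕ, spec (L ^ t * X * (Lᵀ) ^ t) ≤ ρ ^ (2 * t) * spec X := by
    intro t
    induction t with
    | zero => simp only [pow_zero, one_mul, mul_one, Matrix.transpose_one, mul_zero]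
              simpa using le_refl (spec X)
    | succ t ih =>
      have hrw : L ^ (t + 1) * X * (Lᵀ) ^ (t + 1) = L * (L ^ t * X * (Lᵀ) ^ t) * Lᵀ := by
        rw [pow_succ' L, pow_succ (Lᵀ)]; noncomm_ring
      rw [hrw]
      calc spec (L * (L ^ t * X * (Lᵀ) ^ t) * Lᵀ)
          ≤ ρ ^ 2 * spec (L ^ t * X * (Lᵀ) ^ t) := conj_spec_le' hρ0.le hL _
        _ ≤ ρ ^ 2 * (ρ ^ (2 * t) * spec X) :=
            mul_le_mul_of_nonneg_left ih (by positivity)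
        _ = ρ ^ (2 * (t + 1)) * spec X := by ring
  -- norm bound on the difference of iterates
  have hD : ∀ t : ℕ, spec (L' ^ t * X * (L'ᵀ) ^ t - L ^ t * X * (Lᵀ) ^ t) ≤
      ((t : ℝ) * ρ ^ (2 * t) / ρ ^ 2) * (ε * spec X) := by
    intro t
    induction t with
    | zero =>
      simp only [pow_zero, one_mul, mul_one, sub_self, Nat.cast_zero]
      rw [spec_zero']
      simp
    | succ t ih =>
      have hrec : L' ^ (t + 1) * X * (L'ᵀ) ^ (t + 1) - L ^ (t + 1) * X * (Lᵀ) ^ (t + 1) =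
          L' * (L' ^ t * X * (L'ᵀ) ^ t - L ^ t * X * (Lᵀ) ^ t) * L'ᵀ +
            (L' * (L ^ t * X * (Lᵀ) ^ t) * L'ᵀ - L * (L ^ t * X * (Lᵀ) ^ t) * Lᵀ) := by
        rw [pow_succ' L', pow_succ (L'ᵀ), pow_succ' L, pow_succ (Lᵀ)]; noncomm_ring
      rw [hrec]
      push_cast
      calc spec (L' * (L' ^ t * X * (L'ᵀ) ^ t - L ^ t * X * (Lᵀ) ^ t) * L'ᵀ +
            (L' * (L ^ t * X * (Lᵀ) ^ t) * L'ᵀ - L * (L ^ t * X * (Lᵀ) ^ t) * Lᵀ))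
          ≤ spec (L' * (L' ^ t * X * (L'ᵀ) ^ t - L ^ t * X * (Lᵀ) ^ t) * L'ᵀ) +
              spec (L' * (L ^ t * X * (Lᵀ) ^ t) * L'ᵀ - L * (L ^ t * X * (Lᵀ) ^ t) * Lᵀ) :=
            spec_add_le' _ _
        _ ≤ ρ ^ 2 * spec (L' ^ t * X * (L'ᵀ) ^ t - L ^ t * X * (Lᵀ) ^ t) +
              ε * spec (L ^ t * X * (Lᵀ) ^ t) :=
            add_le_add (conj_spec_le' hρ0.le hL' _) (hpert _ (hCherm t))
        _ ≤ ρ ^ 2 * (((t : ℝ) * ρ ^ (2 * t) / ρ ^ 2) * (ε * spec X)) +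
              ε * (ρ ^ (2 * t) * spec X) :=
            add_le_add (mul_le_mul_of_nonneg_left ih (by positivity))
              (mul_le_mul_of_nonneg_left (hC t) hε)
        _ = (((t : ℝ) + 1) * ρ ^ (2 * (t + 1)) / ρ ^ 2) * (ε * spec X) := by
            have h2 : ρ ^ (2 * (t + 1)) = ρ ^ (2 * t) * ρ ^ 2 := by ring
            rw [h2]
            field_simp
  -- the dominating geometric-type series
  have hgeom : HasSum (fun t : ℕ => (t : ℝ) * r ^ t) (r / (1 - r) ^ 2) := by
    have hnr : ‖r‖ < 1 := by rw [Real.norm_eq_abs, abs_of_pos hr0]; exact hr1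
    exact hasSum_coe_mul_geometric_of_norm_lt_one hnr
  have hgsum : HasSum (fun t : ℕ => γ ^ t * (((t : ℝ) * ρ ^ (2 * t) / ρ ^ 2) * (ε * spec X)))
      (r / (1 - r) ^ 2 * ((ε * spec X) / ρ ^ 2)) := by
    have h2 := hgeom.mul_right ((ε * spec X) / ρ ^ 2)
    have heq : (fun t : ℕ => γ ^ t * (((t : ℝ) * ρ ^ (2 * t) / ρ ^ 2) * (ε * spec X))) =
        fun t : ℕ => ((t : ℝ) * r ^ t) * ((ε * spec X) / ρ ^ 2) := by
      funext t
      have hpow : r ^ t = γ ^ t * ρ ^ (2 * t) := by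
        rw [hrdef, mul_pow, ← pow_mul]
      rw [hpow]
      ring
    rw [heq]
    exact h2
  have hfg : ∀ t : ℕ, γ ^ t * spec (L' ^ t * X * (L'ᵀ) ^ t - L ^ t * X * (Lᵀ) ^ t) ≤
      γ ^ t * (((t : ℝ) * ρ ^ (2 * t) / ρ ^ 2) * (ε * spec X)) :=
    fun t => mul_le_mul_of_nonneg_left (hD t) (pow_nonneg hγ0.le t)
  have hf0 : ∀ t : ℕ, 0 ≤ γ ^ t * spec (L' ^ t * X * (L'ᵀ) ^ t - L ^ t * X * (Lᵀ) ^ t) :=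
    fun t => mul_nonneg (pow_nonneg hγ0.le t) (spec_nonneg' _)
  have hfsum : Summable (fun t : ℕ =>
      γ ^ t * spec (L' ^ t * X * (L'ᵀ) ^ t - L ^ t * X * (Lᵀ) ^ t)) :=
    Summable.of_nonneg_of_le hf0 hfg hgsum.summable
  refine ⟨⟨?_, ?_⟩, ?_⟩
  · -- norm of tsum ≤ tsum of norms
    have hb : ∀ t : ℕ, spec (γ ^ t • (L' ^ t * X * (L'ᵀ) ^ t - L ^ t * X * (Lᵀ) ^ t)) ≤
        γ ^ t * (((t : ℝ) * ρ ^ (2 * t) / ρ ^ 2) * (ε * spec X)) := by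
      intro t
      rw [spec_smul', abs_of_pos (pow_pos hγ0 t)]
      exact hfg t
    have h1 := tsum_spec_bound'
      (fun t => γ ^ t • (L' ^ t * X * (L'ᵀ) ^ t - L ^ t * X * (Lᵀ) ^ t)) _ hb hgsum.summable
    refine h1.trans_eq (tsum_congr fun t => ?_)
    rw [spec_smul', abs_of_pos (pow_pos hγ0 t)]
  · -- second bound
    have h2 := Summable.tsum_le_tsum hfg hfsum hgsum.summable
    rw [hgsum.tsum_eq] at h2
    refine h2.trans ?_
    have heq : r / (1 - r) ^ 2 * ((ε * spec X) / ρ ^ 2) = γ / (1 - r) ^ 2 * (ε * spec X) := by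
      rw [hrdef]
      field_simp
    rw [heq]
    have h3 : (1 - r + γ) / (1 - r) ^ 2 * ε * spec X =
        (1 - r + γ) / (1 - r) ^ 2 * (ε * spec X) := by ring
    rw [h3]
    refine mul_le_mul_of_nonneg_right ?_ hcnn
    have hpos : (0 : ℝ) < (1 - r) ^ 2 := pow_pos h1r 2
    exact (div_le_div_iff_of_pos_right hpos).mpr (by linarith)
  · -- finite sums
    intro hρ1 T hT
    obtain ⟨m, rfl⟩ : ∃ m, T = m + 1 := ⟨T - 1, (Nat.succ_pred_eq_of_pos hT).symm⟩
    have hx0 : (0 : ℝ) ≤ ρ ^ 2 := by positivity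
    have hx1 : ρ ^ 2 < 1 := by nlinarith
    have h1x : (0 : ℝ) < 1 - ρ ^ 2 := by linarith
    calc ∑ t ∈ Finset.range (m + 1), spec (L' ^ t * X * (L'ᵀ) ^ t - L ^ t * X * (Lᵀ) ^ t)
        ≤ ∑ t ∈ Finset.range (m + 1), ((t : ℝ) * ρ ^ (2 * t) / ρ ^ 2) * (ε * spec X) :=
          Finset.sum_le_sum fun t _ => hD t
      _ = (∑ s ∈ Finset.range m, ((s : ℝ) + 1) * (ρ ^ 2) ^ s) * (ε * spec X) := by
          rw [Finset.sum_range_succ']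
          simp only [Nat.cast_zero, zero_mul, mul_zero, zero_div, zero_add, add_zero]
          rw [Finset.sum_mul]
          refine Finset.sum_congr rfl fun s _ => ?_
          push_cast
          have h4 : ρ ^ (2 * (s + 1)) = (ρ ^ 2) ^ s * ρ ^ 2 := by
            rw [← pow_mul]; ring
          rw [h4]
          field_simp
      _ ≤ (2 - ρ ^ 2 - (ρ ^ 2) ^ (m + 1)) / (1 - ρ ^ 2) ^ 2 * (ε * spec X) := by
          refine mul_le_mul_of_nonneg_right ?_ hcnn
          have haux := partial_geom_aux' (ρ ^ 2) hx0 hx1 m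
          rw [le_div_iff₀ (by positivity : (0:ℝ) < (1 - ρ ^ 2) ^ 2)]
          nlinarith [mul_nonneg (mul_nonneg
            (by positivity : (0:ℝ) ≤ (m : ℝ) + 1) (pow_nonneg hx0 m)) h1x.le]
      _ = (2 - ρ ^ 2 - ρ ^ (2 * (m + 1))) / (1 - ρ ^ 2) ^ 2 * ε * spec X := by
          rw [← pow_mul]
          ring
end

section
/- (Perturbation of the Riccati solution P_K.) Let ρ ∈ (0, 1/√γ) and assume σ_min(B) > 0. Suppose K* ∈ ℝ^{k×n} satisfies ‖A−BK*‖ ≤ ρ and K* = γ(R + γBᵀP_{K*}B)⁻¹BᵀP_{K*}A; set Σ* := (τ/2)(R + γBᵀP_{K*}B)⁻¹ and S* := S_{K*,Σ*}. Define κ := (ρ + ‖A‖)/σ_min(B), ξ_{γ,ρ} := (1−γρ²+γ)/(1−γρ²)², and c := 2ρ·ξ_{γ,ρ}·‖B‖·(‖Q‖ + ‖R‖κ²) + (1/μ)·‖S*‖·‖R‖·(κ + ‖K*‖). Then for every K ∈ ℝ^{k×n} with ‖A−BK‖ ≤ ρ, one has ‖P_K − P_{K*}‖ ≤ c·‖K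 − K*‖. -/
open Matrix


/-!
`P_K` and `P_{K*}` solve the Stein equations `P = Q + KᵀRK + γ LᵀPL` with `L = A - BK`. The
fixed-point equation for `K*` is equivalent to `R K* = γ Bᵀ P_{K*} (A - BK*)`, and subtracting the
two Stein equations then leaves
`P_K - P_{K*} = (KᵀR - γ Lᵀ P_{K*} B)(K - K*) + γ Lᵀ (P_K - P_{K*}) L`,
so `‖P_K - P_{K*}‖ ≤ ‖KᵀR - γ Lᵀ P_{K*} B‖ ‖K - K*‖ / (1 - γρ²)`. Both gains have norm at most `κ`
since `σ_min(B) ‖K‖ ≤ ‖BK‖ ≤ ρ + ‖A‖`, and `‖P_{K*}‖ ≤ (‖Q‖ + ‖R‖κ²) / (1 - γρ²)`. Finally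
`S*` dominates `D₀` in the Loewner order, so `‖S*‖ ≥ μ` and the second summand of `c` is at least
`‖R‖ κ`.
-/

open scoped Matrix.Norms.L2Operator MatrixOrder

namespace Matrix

variable {m n : Type*} [Fintype m] [Fintype n]

theorem l2_opNorm_transpose [DecidableEq m] [DecidableEq n] (M : Matrix m n ℝ) : ‖Mᵀ‖ = ‖M‖ := by
  rw [← conjTranspose_eq_transpose_of_trivial, l2_opNorm_conjTranspose]

theorem l2_opNorm_pow_le [DecidableEq n] (M : Matrix n n ℝ) (t : ℕ) : ‖M ^ t‖ ≤ ‖M‖ ^ t := by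
  induction t with
  | zero =>
    rw [pow_zero, pow_zero, cstar_norm_def, map_one]
    exact ContinuousLinearMap.norm_id_le
  | succ t ih =>
    rw [pow_succ, pow_succ]
    exact (norm_mul_le _ _).trans (mul_le_mul_of_nonneg_right ih (norm_nonneg _))

theorem l2_opNorm_pow_mul_mul_pow_le [DecidableEq n] {M N : Matrix n n ℝ} {ρ : ℝ}
    (hM : ‖M‖ ≤ ρ) (hN : ‖N‖ ≤ ρ) (V : Matrix n n ℝ) (t : ℕ) :
    ‖M ^ t * V * N ^ t‖ ≤ ‖V‖ * (ρ ^ 2) ^ t := by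
  have hρ : 0 ≤ ρ := (norm_nonneg _).trans hM
  calc ‖M ^ t * V * N ^ t‖ ≤ ‖M‖ ^ t * ‖V‖ * ‖N‖ ^ t :=
        (norm_mul₃_le ..).trans (by gcongr <;> exact l2_opNorm_pow_le _ _)
    _ ≤ ρ ^ t * ‖V‖ * ρ ^ t := by gcongr
    _ = ‖V‖ * (ρ ^ 2) ^ t := by ring

theorem isClosed_setOf_posSemidef : IsClosed {M : Matrix n n ℝ | M.PosSemidef} := by
  have : {M : Matrix n n ℝ | M.PosSemidef} =
      {M | Mᴴ = M} ∩ ⋂ x : n → ℝ, {M | 0 ≤ star x ⬝ᵥ (M *ᵥ x)} := by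
    ext M
    simp [posSemidef_iff_dotProduct_mulVec, IsHermitian]
  rw [this]
  exact (isClosed_eq (by fun_prop) continuous_id).inter
    (isClosed_iInter fun x => isClosed_le continuous_const (by fun_prop))

instance : OrderClosedTopology (Matrix n n ℝ) :=
  ⟨isClosed_le_of_isClosed_nonneg <| by
    simpa only [nonneg_iff_posSemidef] using isClosed_setOf_posSemidef⟩

theorem dotProduct_mulVec_le_l2_opNorm [DecidableEq n] (M : Matrix n n ℝ) {x : EuclideanSpace ℝ n}
    (hx : ‖x‖ = 1) : x.ofLp ⬝ᵥ (M *ᵥ x.ofLp) ≤ ‖M‖ := by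
  rw [← inner_toEuclideanCLM, cstar_norm_def]
  calc _ ≤ ‖x‖ * ‖toEuclideanCLM (n := n) (𝕜 := ℝ) M x‖ := real_inner_le_norm _ _
    _ ≤ ‖x‖ * (‖toEuclideanCLM (n := n) (𝕜 := ℝ) M‖ * ‖x‖) := by
        gcongr; exact ContinuousLinearMap.le_opNorm _ _
    _ = _ := by rw [hx]; ring

end Matrix

section SigMin

variable {m l p : ℕ}

theorem spec_eq_l2_opNorm (M : Matrix (Fin m) (Fin l) ℝ) : spec M = ‖M‖ := rfl

theorem norm_toEuclideanLin_apply_le (M : Matrix (Fin m) (Fin l) ℝ) (x : EuclideanSpace ℝ (Fin l)) :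
    ‖Matrix.toEuclideanLin M x‖ ≤ ‖M‖ * ‖x‖ :=
  (LinearMap.toContinuousLinearMap (Matrix.toEuclideanLin M)).le_opNorm x

theorem sigMin_le_norm_apply (M : Matrix (Fin m) (Fin l) ℝ) {x : EuclideanSpace ℝ (Fin l)}
    (hx : ‖x‖ = 1) : sigMin M ≤ ‖Matrix.toEuclideanLin M x‖ :=
  csInf_le ⟨0, by rintro r ⟨y, -, rfl⟩; exact norm_nonneg _⟩ ⟨x, hx, rfl⟩

theorem sigMin_eq_zero_of_isEmpty [IsEmpty (Fin l)] (M : Matrix (Fin m) (Fin l) ℝ) :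
    sigMin M = 0 := by
  have : ∀ x : EuclideanSpace ℝ (Fin l), ‖x‖ ≠ 1 := fun x => by simp [Subsingleton.elim x 0]
  simp [sigMin, this]

theorem sigMin_nonneg (M : Matrix (Fin m) (Fin l) ℝ) : 0 ≤ sigMin M :=
  Real.sInf_nonneg (by rintro r ⟨y, -, rfl⟩; exact norm_nonneg _)

theorem sigMin_le_l2_opNorm (M : Matrix (Fin m) (Fin l) ℝ) : sigMin M ≤ ‖M‖ := by
  rcases isEmpty_or_nonempty (Fin l) with hl | ⟨⟨i⟩⟩
  · rw [sigMin_eq_zero_of_isEmpty]; exact norm_nonneg _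
  · set x := EuclideanSpace.single i (1 : ℝ)
    have hx : ‖x‖ = 1 := by simp [x]
    calc sigMin M ≤ ‖Matrix.toEuclideanLin M x‖ := sigMin_le_norm_apply M hx
      _ ≤ ‖M‖ := by simpa [hx] using norm_toEuclideanLin_apply_le M x

theorem sigMin_mul_norm_le (M : Matrix (Fin m) (Fin l) ℝ) (y : EuclideanSpace ℝ (Fin l)) :
    sigMin M * ‖y‖ ≤ ‖Matrix.toEuclideanLin M y‖ := by
  rcases eq_or_ne y 0 with rfl | hy
  · simp
  have hy' : ‖y‖ ≠ 0 := norm_ne_zero_iff.mpr hy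
  have h := sigMin_le_norm_apply M (x := ‖y‖⁻¹ • y) (by simp [norm_smul, hy'])
  rw [map_smul, norm_smul, norm_inv, norm_norm] at h
  rwa [le_inv_mul_iff₀ (norm_pos_iff.mpr hy), mul_comm] at h

theorem sigMin_mul_l2_opNorm_le (M : Matrix (Fin m) (Fin l) ℝ) (N : Matrix (Fin l) (Fin p) ℝ) :
    sigMin M * ‖N‖ ≤ ‖M * N‖ := by
  rcases (sigMin_nonneg M).eq_or_lt with h0 | hpos
  · rw [← h0, zero_mul]; exact norm_nonneg _
  rw [mul_comm, ← le_div_iff₀ hpos]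
  refine ContinuousLinearMap.opNorm_le_bound _ (by positivity) fun x => ?_
  rw [div_mul_eq_mul_div, le_div_iff₀ hpos, mul_comm]
  calc sigMin M * ‖Matrix.toEuclideanLin N x‖
      ≤ ‖Matrix.toEuclideanLin M (Matrix.toEuclideanLin N x)‖ := sigMin_mul_norm_le M _
    _ = ‖Matrix.toEuclideanLin (M * N) x‖ := by simp
    _ ≤ ‖M * N‖ * ‖x‖ := norm_toEuclideanLin_apply_le _ x

theorem l2_opNorm_le_of_l2_opNorm_sub_mul_le {A : Matrix (Fin m) (Fin p) ℝ}
    {B : Matrix (Fin m) (Fin l) ℝ} {K : Matrix (Fin l) (Fin p) ℝ} {ρ : ℝ}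
    (hB : 0 < sigMin B) (hK : ‖A - B * K‖ ≤ ρ) : ‖K‖ ≤ (ρ + ‖A‖) / sigMin B := by
  rw [le_div_iff₀' hB]
  calc sigMin B * ‖K‖ ≤ ‖B * K‖ := sigMin_mul_l2_opNorm_le B K
    _ = ‖A - (A - B * K)‖ := by rw [sub_sub_cancel]
    _ ≤ ρ + ‖A‖ := by linarith [norm_sub_le A (A - B * K)]

theorem sigMin_le_l2_opNorm_of_le {n : ℕ} {D S : Matrix (Fin n) (Fin n) ℝ} (hD : D.PosSemidef)
    (hDS : D ≤ S) : sigMin D ≤ ‖S‖ := by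
  rcases isEmpty_or_nonempty (Fin n) with hn | ⟨⟨i⟩⟩
  · rw [sigMin_eq_zero_of_isEmpty]; exact norm_nonneg _
  set v := hD.1.eigenvectorBasis i
  have hv : ‖v‖ = 1 := hD.1.eigenvectorBasis.orthonormal.1 i
  have hDv : D *ᵥ v.ofLp = hD.1.eigenvalues i • v.ofLp := hD.1.mulVec_eigenvectorBasis i
  have hquad : v.ofLp ⬝ᵥ (D *ᵥ v.ofLp) = hD.1.eigenvalues i := by
    simpa [dotProduct_comm] using (hD.1.eigenvalues_eq i).symm
  calc sigMin D ≤ ‖Matrix.toEuclideanLin D v‖ := sigMin_le_norm_apply D hv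
    _ = hD.1.eigenvalues i := by
        rw [Matrix.toLpLin_apply, hDv, WithLp.toLp_smul, norm_smul, WithLp.toLp_ofLp, hv,
          mul_one, Real.norm_of_nonneg (hD.eigenvalues_nonneg i)]
    _ ≤ v.ofLp ⬝ᵥ (S *ᵥ v.ofLp) := by
        have := (Matrix.le_iff.mp hDS).dotProduct_mulVec_nonneg v.ofLp
        simp only [star_trivial, Matrix.sub_mulVec, dotProduct_sub, sub_nonneg] at this
        rwa [← hquad]
    _ ≤ ‖S‖ := Matrix.dotProduct_mulVec_le_l2_opNorm S hv

end SigMin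

section Lyapunov

variable {ι : Type*} [Fintype ι] [DecidableEq ι] {γ ρ : ℝ} {L C : Matrix ι ι ℝ}

noncomputable def lyapunovSum (γ : ℝ) (L C : Matrix ι ι ℝ) : Matrix ι ι ℝ :=
  ∑' t : ℕ, γ ^ t • ((Lᵀ) ^ t * C * L ^ t)

theorem summable_lyapunovSum (hγ : 0 ≤ γ) (hL : ‖L‖ ≤ ρ) (hγρ : γ * ρ ^ 2 < 1) :
    Summable fun t : ℕ => γ ^ t • ((Lᵀ) ^ t * C * L ^ t) := by
  refine .of_norm_bounded ((summable_geometric_of_lt_one (by positivity) hγρ).mul_left ‖C‖)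
    fun t => ?_
  have hLt : ‖Lᵀ‖ ≤ ρ := by rwa [Matrix.l2_opNorm_transpose]
  calc ‖γ ^ t • ((Lᵀ) ^ t * C * L ^ t)‖ = γ ^ t * ‖(Lᵀ) ^ t * C * L ^ t‖ := by
        rw [norm_smul, Real.norm_of_nonneg (by positivity)]
    _ ≤ γ ^ t * (‖C‖ * (ρ ^ 2) ^ t) := by
        gcongr; exact Matrix.l2_opNorm_pow_mul_mul_pow_le hLt hL C t
    _ = ‖C‖ * (γ * ρ ^ 2) ^ t := by ring

theorem lyapunovSum_eq (hγ : 0 ≤ γ) (hL : ‖L‖ ≤ ρ) (hγρ : γ * ρ ^ 2 < 1) :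
    lyapunovSum γ L C = C + γ • (Lᵀ * lyapunovSum γ L C * L) := by
  have hs := summable_lyapunovSum (C := C) hγ hL hγρ
  calc lyapunovSum γ L C = C + ∑' t : ℕ, γ • (Lᵀ * (γ ^ t • ((Lᵀ) ^ t * C * L ^ t)) * L) := by
        rw [lyapunovSum, hs.tsum_eq_zero_add]
        congr 1
        · simp
        · refine tsum_congr fun t => ?_
          rw [pow_succ', pow_succ', pow_succ, mul_smul, Matrix.mul_smul, Matrix.smul_mul]
          simp only [Matrix.mul_assoc]
    _ = C + γ • (Lᵀ * lyapunovSum γ L C * L) := by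
        rw [((hs.mul_left Lᵀ).mul_right L).tsum_const_smul, (hs.mul_left Lᵀ).tsum_mul_right,
          hs.tsum_mul_left, lyapunovSum]

theorem posSemidef_lyapunovSum (hγ : 0 ≤ γ) (hC : C.PosSemidef) :
    (lyapunovSum γ L C).PosSemidef := by
  refine Matrix.nonneg_iff_posSemidef.mp (tsum_nonneg fun t => ?_)
  rw [Matrix.nonneg_iff_posSemidef, ← Matrix.transpose_pow]
  exact (hC.conjTranspose_mul_mul_same (L ^ t)).smul (pow_nonneg hγ t)

theorem l2_opNorm_le_of_eq_add_smul_mul_mul {X M : Matrix ι ι ℝ} (hγ : 0 ≤ γ) (hL : ‖L‖ ≤ ρ)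
    (hγρ : γ * ρ ^ 2 < 1) (hX : X = M + γ • (Lᵀ * X * L)) :
    ‖X‖ ≤ ‖M‖ / (1 - γ * ρ ^ 2) := by
  rw [le_div_iff₀ (by linarith)]
  have hρ : 0 ≤ ρ := (norm_nonneg _).trans hL
  have : ‖γ • (Lᵀ * X * L)‖ ≤ γ * ρ ^ 2 * ‖X‖ := by
    rw [norm_smul, Real.norm_of_nonneg hγ]
    calc γ * ‖Lᵀ * X * L‖ ≤ γ * (‖Lᵀ‖ * ‖X‖ * ‖L‖) := by gcongr; exact norm_mul₃_le ..
      _ ≤ γ * (ρ * ‖X‖ * ρ) := by rw [Matrix.l2_opNorm_transpose]; gcongr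
      _ = γ * ρ ^ 2 * ‖X‖ := by ring
  have := norm_add_le M (γ • (Lᵀ * X * L))
  rw [← hX] at this
  linarith

end Lyapunov

theorem pow_mul_pow_le_max_pow {γ a : ℝ} (hγ : 0 ≤ γ) (ha : 0 ≤ a) {j t : ℕ} (hjt : j ≤ t) :
    γ ^ t * a ^ j ≤ max γ (γ * a) ^ t := by
  calc γ ^ t * a ^ j = γ ^ (t - j) * (γ * a) ^ j := by
        rw [mul_pow, ← mul_assoc, ← pow_add, Nat.sub_add_cancel hjt]
    _ ≤ max γ (γ * a) ^ (t - j) * max γ (γ * a) ^ j := by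
        gcongr
        exacts [le_max_left _ _, le_max_right _ _]
    _ = max γ (γ * a) ^ t := by rw [← pow_add, Nat.sub_add_cancel hjt]

theorem summable_covarianceSeries {ι : Type*} [Fintype ι] [DecidableEq ι] {γ ρ : ℝ}
    {L D V : Matrix ι ι ℝ} (hγ0 : 0 ≤ γ) (hγ1 : γ < 1) (hγρ : γ * ρ ^ 2 < 1) (hL : ‖L‖ ≤ ρ) :
    Summable fun t : ℕ => γ ^ t •
      (L ^ t * D * (Lᵀ) ^ t + ∑ s ∈ Finset.Icc 1 t, L ^ (t - s) * V * (Lᵀ) ^ (t - s)) := by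
  set r := max γ (γ * ρ ^ 2)
  have hr0 : 0 ≤ r := hγ0.trans (le_max_left _ _)
  have hr1 : r < 1 := max_lt hγ1 hγρ
  have hLt : ‖Lᵀ‖ ≤ ρ := by rwa [Matrix.l2_opNorm_transpose]
  have hterm (M : Matrix ι ι ℝ) {j t : ℕ} (hjt : j ≤ t) :
      γ ^ t * ‖L ^ j * M * (Lᵀ) ^ j‖ ≤ ‖M‖ * r ^ t :=
    calc γ ^ t * ‖L ^ j * M * (Lᵀ) ^ j‖ ≤ γ ^ t * (‖M‖ * (ρ ^ 2) ^ j) := by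
          gcongr; exact Matrix.l2_opNorm_pow_mul_mul_pow_le hL hLt M j
      _ = ‖M‖ * (γ ^ t * (ρ ^ 2) ^ j) := by ring
      _ ≤ ‖M‖ * r ^ t := by gcongr; exact pow_mul_pow_le_max_pow hγ0 (by positivity) hjt
  have hg : Summable fun t : ℕ => ‖D‖ * r ^ t + ‖V‖ * ((t : ℝ) ^ 1 * r ^ t) :=
    ((summable_geometric_of_lt_one hr0 hr1).mul_left _).add
      ((summable_pow_mul_geometric_of_norm_lt_one (R := ℝ) 1
        (by rwa [Real.norm_of_nonneg hr0])).mul_left _)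
  refine .of_norm_bounded hg fun t => ?_
  rw [norm_smul, Real.norm_of_nonneg (by positivity)]
  refine (mul_le_mul_of_nonneg_left (norm_add_le _ _) (by positivity)).trans ?_
  rw [mul_add]
  refine add_le_add (hterm D le_rfl) ?_
  calc γ ^ t * ‖∑ s ∈ Finset.Icc 1 t, L ^ (t - s) * V * (Lᵀ) ^ (t - s)‖
      ≤ ∑ s ∈ Finset.Icc 1 t, γ ^ t * ‖L ^ (t - s) * V * (Lᵀ) ^ (t - s)‖ := by
        rw [← Finset.mul_sum]; gcongr; exact norm_sum_le _ _
    _ ≤ ∑ s ∈ Finset.Icc 1 t, ‖V‖ * r ^ t :=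
        Finset.sum_le_sum fun s _ => hterm V (Nat.sub_le t s)
    _ = ‖V‖ * ((t : ℝ) ^ 1 * r ^ t) := by simp; ring

section Covariance

variable {n k : ℕ} {γ ρ : ℝ} {A : Matrix (Fin n) (Fin n) ℝ} {B : Matrix (Fin n) (Fin k) ℝ}
  {W D₀ : Matrix (Fin n) (Fin n) ℝ} {K : Matrix (Fin k) (Fin n) ℝ} {Sg : Matrix (Fin k) (Fin k) ℝ}

theorem le_Smat (hγ0 : 0 ≤ γ) (hγ1 : γ < 1) (hγρ : γ * ρ ^ 2 < 1) (hK : ‖A - B * K‖ ≤ ρ)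
    (hW : W.PosSemidef) (hD₀ : D₀.PosSemidef) (hSg : Sg.PosSemidef) :
    D₀ ≤ Smat γ A B W D₀ K Sg := by
  have hV : (B * Sg * Bᵀ + W).PosSemidef := by
    simpa using (hSg.mul_mul_conjTranspose_same B).add hW
  have hterm (L : Matrix (Fin n) (Fin n) ℝ) (M : Matrix (Fin n) (Fin n) ℝ) (hM : M.PosSemidef)
      (j : ℕ) : 0 ≤ L ^ j * M * (Lᵀ) ^ j := by
    rw [Matrix.nonneg_iff_posSemidef, ← Matrix.transpose_pow]
    simpa using hM.mul_mul_conjTranspose_same (L ^ j)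
  refine ((summable_covarianceSeries hγ0 hγ1 hγρ hK).le_tsum 0 fun t _ => ?_).trans_eq' (by simp)
  exact smul_nonneg (pow_nonneg hγ0 t) (add_nonneg (hterm _ _ hD₀ t)
    (Finset.sum_nonneg fun s _ => hterm _ _ hV _))

end Covariance

section Riccati

variable {n k : ℕ} {γ ρ : ℝ} {A : Matrix (Fin n) (Fin n) ℝ} {B : Matrix (Fin n) (Fin k) ℝ}
  {Q : Matrix (Fin n) (Fin n) ℝ} {R : Matrix (Fin k) (Fin k) ℝ} {K K' : Matrix (Fin k) (Fin n) ℝ}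

theorem Pmat_eq_lyapunovSum :
    Pmat γ A B Q R K = lyapunovSum γ (A - B * K) (Q + Kᵀ * R * K) := rfl

theorem posSemidef_Pmat (hγ : 0 ≤ γ) (hQ : Q.PosSemidef) (hR : R.PosSemidef) :
    (Pmat γ A B Q R K).PosSemidef := by
  rw [Pmat_eq_lyapunovSum]
  exact posSemidef_lyapunovSum hγ (hQ.add (by simpa using hR.conjTranspose_mul_mul_same K))

theorem posDef_add_smul_transpose_mul_Pmat_mul (hγ : 0 ≤ γ) (hQ : Q.PosSemidef)
    (hR : R.PosDef) : (R + γ • (Bᵀ * Pmat γ A B Q R K * B)).PosDef :=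
  hR.add_posSemidef
    (((posSemidef_Pmat hγ hQ hR.posSemidef).conjTranspose_mul_mul_same B).smul hγ)

theorem l2_opNorm_Pmat_le (hγ : 0 ≤ γ) (hγρ : γ * ρ ^ 2 < 1) (hK : ‖A - B * K‖ ≤ ρ) :
    ‖Pmat γ A B Q R K‖ ≤ (‖Q‖ + ‖R‖ * ‖K‖ ^ 2) / (1 - γ * ρ ^ 2) := by
  rw [Pmat_eq_lyapunovSum]
  refine (l2_opNorm_le_of_eq_add_smul_mul_mul hγ hK hγρ (lyapunovSum_eq hγ hK hγρ)).trans ?_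
  gcongr
  calc ‖Q + Kᵀ * R * K‖ ≤ ‖Q‖ + ‖Kᵀ * R‖ * ‖K‖ :=
        (norm_add_le _ _).trans (by gcongr; exact Matrix.l2_opNorm_mul _ _)
    _ ≤ ‖Q‖ + ‖Kᵀ‖ * ‖R‖ * ‖K‖ := by gcongr; exact Matrix.l2_opNorm_mul _ _
    _ = ‖Q‖ + ‖R‖ * ‖K‖ ^ 2 := by rw [Matrix.l2_opNorm_transpose]; ring

theorem mul_eq_smul_of_eq_smul_inv_mul {P : Matrix (Fin n) (Fin n) ℝ}
    (hG : IsUnit (R + γ • (Bᵀ * P * B)).det)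
    (hK : K = γ • ((R + γ • (Bᵀ * P * B))⁻¹ * (Bᵀ * P * A))) :
    R * K = γ • (Bᵀ * P * (A - B * K)) := by
  have hGK : (R + γ • (Bᵀ * P * B)) * K = γ • (Bᵀ * P * A) := by
    rw [hK, Matrix.mul_smul, Matrix.mul_nonsing_inv_cancel_left _ _ hG]
  rw [Matrix.add_mul, Matrix.smul_mul, ← eq_sub_iff_add_eq] at hGK
  rw [hGK]
  simp only [Matrix.mul_sub, smul_sub, Matrix.mul_assoc]

theorem sub_eq_of_stein_eq {P P' : Matrix (Fin n) (Fin n) ℝ}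
    (hP : P = Q + Kᵀ * R * K + γ • ((A - B * K)ᵀ * P * (A - B * K)))
    (hP' : P' = Q + K'ᵀ * R * K' + γ • ((A - B * K')ᵀ * P' * (A - B * K')))
    (hK' : R * K' = γ • (Bᵀ * P' * (A - B * K'))) :
    P - P' = (Kᵀ * R - γ • ((A - B * K)ᵀ * P' * B)) * (K - K') +
      γ • ((A - B * K)ᵀ * (P - P') * (A - B * K)) := by
  have key : P - P' = (K - K')ᵀ * (R * K' - γ • (Bᵀ * P' * (A - B * K'))) +
      (Kᵀ * R - γ • ((A - B * K)ᵀ * P' * B)) * (K - K') +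
      γ • ((A - B * K)ᵀ * (P - P') * (A - B * K)) := by
    conv_lhs => rw [hP, hP']
    simp only [Matrix.transpose_sub, Matrix.transpose_mul, Matrix.sub_mul, Matrix.mul_sub,
      smul_sub, Matrix.smul_mul, Matrix.mul_smul, Matrix.mul_assoc]
    module
  rwa [sub_eq_zero.mpr hK', Matrix.mul_zero, zero_add] at key

theorem l2_opNorm_Pmat_sub_le (hγ : 0 ≤ γ) (hγρ : γ * ρ ^ 2 < 1) (hQ : Q.PosSemidef)
    (hR : R.PosDef) (hK : ‖A - B * K‖ ≤ ρ) (hK' : ‖A - B * K'‖ ≤ ρ)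
    (hfix : K' = γ • ((R + γ • (Bᵀ * Pmat γ A B Q R K' * B))⁻¹ * (Bᵀ * Pmat γ A B Q R K' * A))) :
    ‖Pmat γ A B Q R K - Pmat γ A B Q R K'‖ ≤
      (‖R‖ * ‖K‖ + γ * ρ * ‖B‖ * ‖Pmat γ A B Q R K'‖) / (1 - γ * ρ ^ 2) * ‖K - K'‖ := by
  have hG := posDef_add_smul_transpose_mul_Pmat_mul (A := A) (B := B) (K := K') hγ hQ hR
  set P' := Pmat γ A B Q R K'
  have hdiff : Pmat γ A B Q R K - P' = (Kᵀ * R - γ • ((A - B * K)ᵀ * P' * B)) * (K - K') +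
      γ • ((A - B * K)ᵀ * (Pmat γ A B Q R K - P') * (A - B * K)) :=
    sub_eq_of_stein_eq (lyapunovSum_eq hγ hK hγρ) (lyapunovSum_eq hγ hK' hγρ)
      (mul_eq_smul_of_eq_smul_inv_mul hG.det_pos.ne'.isUnit hfix)
  have hcoef : ‖Kᵀ * R - γ • ((A - B * K)ᵀ * P' * B)‖ ≤ ‖R‖ * ‖K‖ + γ * ρ * ‖B‖ * ‖P'‖ :=
    calc ‖Kᵀ * R - γ • ((A - B * K)ᵀ * P' * B)‖
        ≤ ‖Kᵀ‖ * ‖R‖ + γ * (‖(A - B * K)ᵀ‖ * ‖P'‖ * ‖B‖) := by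
          refine (norm_sub_le _ _).trans (add_le_add (Matrix.l2_opNorm_mul _ _) ?_)
          rw [norm_smul, Real.norm_of_nonneg hγ]
          gcongr
          exact (Matrix.l2_opNorm_mul _ _).trans (by gcongr; exact norm_mul_le _ _)
      _ ≤ ‖R‖ * ‖K‖ + γ * (ρ * ‖P'‖ * ‖B‖) := by
          rw [Matrix.l2_opNorm_transpose, Matrix.l2_opNorm_transpose, mul_comm ‖K‖]
          gcongr
      _ = ‖R‖ * ‖K‖ + γ * ρ * ‖B‖ * ‖P'‖ := by ring
  rw [div_mul_eq_mul_div]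
  refine (l2_opNorm_le_of_eq_add_smul_mul_mul hγ hK hγρ hdiff).trans ?_
  gcongr
  exact (Matrix.l2_opNorm_mul _ _).trans (by gcongr)

end Riccati

theorem riccati_constant_le {γ ρ b r k κ e p M : ℝ} (hγ : 0 ≤ γ) (hγρ : γ * ρ ^ 2 < 1)
    (hρ : 0 ≤ ρ) (hb : 0 ≤ b) (hr : 0 ≤ r) (hκ : 0 ≤ κ) (hk : k ≤ κ) (hρκ : ρ ≤ b * κ)
    (he : r * κ ^ 2 ≤ e) (hp : p ≤ e / (1 - γ * ρ ^ 2)) (hM : r * κ ≤ M) :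
    (r * k + γ * ρ * b * p) / (1 - γ * ρ ^ 2) ≤
      2 * ρ * ((1 - γ * ρ ^ 2 + γ) / (1 - γ * ρ ^ 2) ^ 2) * b * e + M := by
  set u := 1 - γ * ρ ^ 2
  have hu : 0 < u := by linarith
  have hu1 : u ≤ 1 := by have := mul_nonneg hγ (sq_nonneg ρ); linarith
  have he0 : 0 ≤ e := (by positivity : 0 ≤ r * κ ^ 2).trans he
  have hM' : r * κ * u ^ 2 ≤ M * u ^ 2 := by gcongr
  have hcross : r * κ * u * (γ * ρ ^ 2) ≤ γ * ρ * b * e :=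
    calc r * κ * u * (γ * ρ ^ 2) ≤ r * κ * 1 * (γ * ρ ^ 2) := by gcongr
      _ = γ * ρ * (ρ * (r * κ)) := by ring
      _ ≤ γ * ρ * (b * κ * (r * κ)) := by gcongr
      _ = γ * ρ * b * (r * κ ^ 2) := by ring
      _ ≤ γ * ρ * b * e := by gcongr
  have hkey : r * κ * u + γ * ρ * b * e ≤ 2 * ρ * (u + γ) * b * e + M * u ^ 2 := by
    have : 0 ≤ ρ * b * e * u := by positivity
    nlinarith
  calc (r * k + γ * ρ * b * p) / u ≤ (r * κ + γ * ρ * b * (e / u)) / u := by gcongr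
    _ = (r * κ * u + γ * ρ * b * e) / u ^ 2 := by field_simp
    _ ≤ (2 * ρ * (u + γ) * b * e + M * u ^ 2) / u ^ 2 := by gcongr
    _ = 2 * ρ * ((u + γ) / u ^ 2) * b * e + M := by field_simp

theorem mul_sq_lt_one_of_lt_one_div_sqrt {γ ρ : ℝ} (hγ : 0 < γ) (hρ : 0 ≤ ρ)
    (h : ρ < 1 / Real.sqrt γ) : γ * ρ ^ 2 < 1 := by
  rw [lt_div_iff₀ (Real.sqrt_pos.mpr hγ)] at h
  calc γ * ρ ^ 2 = (ρ * Real.sqrt γ) ^ 2 := by rw [mul_pow, Real.sq_sqrt hγ.le]; ring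
    _ < 1 := pow_lt_one₀ (by positivity) h two_ne_zero

theorem stmt19_general (n k : ℕ)
    (γ τ : ℝ) (hγ0 : 0 < γ) (hγ1 : γ < 1) (hτ : 0 < τ)
    (A : Matrix (Fin n) (Fin n) ℝ) (B : Matrix (Fin n) (Fin k) ℝ)
    (Q : Matrix (Fin n) (Fin n) ℝ) (hQ : Q.PosSemidef)
    (R : Matrix (Fin k) (Fin k) ℝ) (hR : R.PosDef)
    (W : Matrix (Fin n) (Fin n) ℝ) (hW : W.PosSemidef)
    (D₀ : Matrix (Fin n) (Fin n) ℝ) (hD₀ : D₀.PosSemidef) (hμ : 0 < sigMin D₀)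
    (ρ : ℝ) (hρ : ρ < 1 / Real.sqrt γ) (hB : 0 < sigMin B)
    (Kstar : Matrix (Fin k) (Fin n) ℝ)
    (hKstarρ : spec (A - B * Kstar) ≤ ρ)
    (hfix : Kstar =
      γ • ((R + γ • (Bᵀ * Pmat γ A B Q R Kstar * B))⁻¹ * (Bᵀ * Pmat γ A B Q R Kstar * A)))
    (Sgstar : Matrix (Fin k) (Fin k) ℝ)
    (hSgstar : Sgstar = (τ / 2) • (R + γ • (Bᵀ * Pmat γ A B Q R Kstar * B))⁻¹)
    (Sstar : Matrix (Fin n) (Fin n) ℝ)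
    (hSstar : Sstar = Smat γ A B W D₀ Kstar Sgstar)
    (κ ξ c : ℝ)
    (hκ : κ = (ρ + spec A) / sigMin B)
    (hξ : ξ = (1 - γ * ρ ^ 2 + γ) / (1 - γ * ρ ^ 2) ^ 2)
    (hc : c = 2 * ρ * ξ * spec B * (spec Q + spec R * κ ^ 2) +
      (1 / sigMin D₀) * spec Sstar * spec R * (κ + spec Kstar))
    (K : Matrix (Fin k) (Fin n) ℝ) (hKρ : spec (A - B * K) ≤ ρ) :
    spec (Pmat γ A B Q R K - Pmat γ A B Q R Kstar) ≤ c * spec (K - Kstar) := by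
  simp only [spec_eq_l2_opNorm] at hKstarρ hKρ hκ hc ⊢
  have hρ0 : 0 ≤ ρ := (norm_nonneg _).trans hKρ
  have hγρ := mul_sq_lt_one_of_lt_one_div_sqrt hγ0 hρ0 hρ
  have hKκ : ‖K‖ ≤ κ := hκ ▸ l2_opNorm_le_of_l2_opNorm_sub_mul_le hB hKρ
  have hKstarκ : ‖Kstar‖ ≤ κ := hκ ▸ l2_opNorm_le_of_l2_opNorm_sub_mul_le hB hKstarρ
  have hκ0 : 0 ≤ κ := (norm_nonneg _).trans hKκ
  have hρκ : ρ ≤ ‖B‖ * κ := by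
    rw [hκ, mul_div_assoc', le_div_iff₀ hB]
    nlinarith [sigMin_le_l2_opNorm B, norm_nonneg A, norm_nonneg B]
  have hPstar : ‖Pmat γ A B Q R Kstar‖ ≤ (‖Q‖ + ‖R‖ * κ ^ 2) / (1 - γ * ρ ^ 2) :=
    (l2_opNorm_Pmat_le hγ0.le hγρ hKstarρ).trans (by gcongr)
  have hSgstar_psd : Sgstar.PosSemidef := hSgstar ▸
    (posDef_add_smul_transpose_mul_Pmat_mul hγ0.le hQ hR).posSemidef.inv.smul (by positivity)
  have hμS : sigMin D₀ ≤ ‖Sstar‖ := hSstar ▸ sigMin_le_l2_opNorm_of_le hD₀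
    (le_Smat hγ0.le hγ1 hγρ hKstarρ hW hD₀ hSgstar_psd)
  have hM : ‖R‖ * κ ≤ 1 / sigMin D₀ * ‖Sstar‖ * ‖R‖ * (κ + ‖Kstar‖) := by
    have h1 : 1 ≤ 1 / sigMin D₀ * ‖Sstar‖ := by rwa [one_div_mul_eq_div, one_le_div hμ]
    have h2 : ‖R‖ * κ ≤ ‖R‖ * (κ + ‖Kstar‖) := by
      gcongr; exact le_add_of_nonneg_right (norm_nonneg _)
    nlinarith [mul_le_mul_of_nonneg_right h1 (by positivity : 0 ≤ ‖R‖ * (κ + ‖Kstar‖))]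
  refine (l2_opNorm_Pmat_sub_le hγ0.le hγρ hQ hR hKρ hKstarρ hfix).trans ?_
  rw [hc, hξ]
  gcongr
  exact riccati_constant_le hγ0.le hγρ hρ0 (norm_nonneg B) (norm_nonneg R)
    hκ0 hKκ hρκ (le_add_of_nonneg_left (norm_nonneg Q)) hPstar hM

/-- Perturbation bound for the Riccati solution `P_K`. -/
theorem stmt19 (n k : ℕ) (hn : 0 < n) (hk : 0 < k)
    (γ τ : ℝ) (hγ0 : 0 < γ) (hγ1 : γ < 1) (hτ : 0 < τ)
    (A : Matrix (Fin n) (Fin n) ℝ) (B : Matrix (Fin n) (Fin k) ℝ)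
    (Q : Matrix (Fin n) (Fin n) ℝ) (hQ : Q.PosSemidef)
    (R : Matrix (Fin k) (Fin k) ℝ) (hR : R.PosDef)
    (W : Matrix (Fin n) (Fin n) ℝ) (hW : W.PosSemidef)
    (D₀ : Matrix (Fin n) (Fin n) ℝ) (hD₀ : D₀.PosSemidef) (hμ : 0 < sigMin D₀)
    (ρ : ℝ) (hρ0 : 0 < ρ) (hρ : ρ < 1 / Real.sqrt γ) (hB : 0 < sigMin B)
    (Kstar : Matrix (Fin k) (Fin n) ℝ)
    (hKstarρ : spec (A - B * Kstar) ≤ ρ)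
    (hfix : Kstar =
      γ • ((R + γ • (Bᵀ * Pmat γ A B Q R Kstar * B))⁻¹ * (Bᵀ * Pmat γ A B Q R Kstar * A)))
    (Sgstar : Matrix (Fin k) (Fin k) ℝ)
    (hSgstar : Sgstar = (τ / 2) • (R + γ • (Bᵀ * Pmat γ A B Q R Kstar * B))⁻¹)
    (Sstar : Matrix (Fin n) (Fin n) ℝ)
    (hSstar : Sstar = Smat γ A B W D₀ Kstar Sgstar)
    (κ ξ c : ℝ)
    (hκ : κ = (ρ + spec A) / sigMin B)
    (hξ : ξ = (1 - γ * ρ ^ 2 + γ) / (1 - γ * ρ ^ 2) ^ 2)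
    (hc : c = 2 * ρ * ξ * spec B * (spec Q + spec R * κ ^ 2) +
      (1 / sigMin D₀) * spec Sstar * spec R * (κ + spec Kstar))
    (K : Matrix (Fin k) (Fin n) ℝ) (hKρ : spec (A - B * K) ≤ ρ) :
    spec (Pmat γ A B Q R K - Pmat γ A B Q R Kstar) ≤ c * spec (K - Kstar) :=
  stmt19_general n k γ τ hγ0 hγ1 hτ A B Q hQ R hR W hW D₀ hD₀ hμ ρ hρ hB Kstar hKstarρ hfix Sgstar
    hSgstar Sstar hSstar κ ξ c hκ hξ hc K hKρ
end
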